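/- For every integer k ≥ 1 and every integer n ≥ 3 with (k,n) ≠ (1,5), the incidence chromatic number of the toroidal grid satisfies χ_i(T_{4k,n}) ≤ 6. -/

import Mathlib

open SimpleGraph

/-- The type of incidences of a graph `G`: pairs `(v, e)` where `e` is an edge of `G`
incident to the vertex `v`. -/
def Incidence {V : Type*} (G : SimpleGraph V) : Type _ :=
  {p : V × Sym2 V // p.2 ∈ G.edgeSet ∧ p.1 ∈ p.2}

/-- The graph on the incidences of `G` in which two distinct incidences `(v,e)` and `(w,f)`
are adjacent iff `v = w`, or `e = f`, or the edge `vw` equals `e` or `f`. -/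
def incidenceGraph {V : Type*} (G : SimpleGraph V) : SimpleGraph (Incidence G) where
  Adj i j := i ≠ j ∧
    (i.1.1 = j.1.1 ∨ i.1.2 = j.1.2 ∨ s(i.1.1, j.1.1) = i.1.2 ∨ s(i.1.1, j.1.1) = j.1.2)
  symm := ⟨by
    rintro ⟨⟨v, e⟩, hi⟩ ⟨⟨w, f⟩, hj⟩ ⟨hne, h⟩
    refine ⟨fun h' => hne h'.symm, ?_⟩
    simp only at h ⊢
    rcases h with h | h | h | h
    · exact Or.inl h.symm
    · exact Or.inr (Or.inl h.symm)
    · exact Or.inr (Or.inr (Or.inr ((Sym2.eq_swap).trans h)))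
    · exact Or.inr (Or.inr (Or.inl ((Sym2.eq_swap).trans h)))⟩
  loopless := ⟨fun i h => h.1 rfl⟩

/-- The incidence chromatic number of a graph: the least number of colors in a proper
coloring of its incidences. -/
noncomputable def incidenceChromaticNumber {V : Type*} (G : SimpleGraph V) : ℕ∞ :=
  (incidenceGraph G).chromaticNumber

/-- The square of a graph `G`: distinct vertices are adjacent iff they are at distance
at most 2 in `G`. -/
def SimpleGraph.square {V : Type*} (G : SimpleGraph V) : SimpleGraph V where
  Adj u v := u ≠ v ∧ (G.Adj u v ∨ ∃ w, G.Adj u w ∧ G.Adj w v)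
  symm := ⟨by
    rintro u v ⟨hne, h | ⟨w, h1, h2⟩⟩
    · exact ⟨hne.symm, Or.inl h.symm⟩
    · exact ⟨hne.symm, Or.inr ⟨w, h2.symm, h1.symm⟩⟩⟩
  loopless := ⟨fun v h => h.1 rfl⟩

/-- The toroidal grid `T_{m,n} = C_m □ C_n`. -/
def toroidalGrid (m n : ℕ) : SimpleGraph (Fin m × Fin n) :=
  SimpleGraph.boxProd (SimpleGraph.cycleGraph m) (SimpleGraph.cycleGraph n)

/-!
Colour the incidence `(v, vw)` by `c v w`. This is a proper incidence colouring exactly when the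
arcs leaving each vertex get distinct colours and no arc `u → v` has the colour of an arc
leaving `v`; such arc colourings pull back along graph homomorphisms that are injective on
neighbourhoods, e.g. the covering `T_{4k,n} → T_{4,n}`.

On `T_{p,n}` we let `c v w` depend only on the column of `v`, the row of `v` and the direction
from `v` to `w`. The two conditions then only involve single columns and pairs of consecutive
columns, so any closed walk of length `n` in the digraph of compatible columns of height `p`
colours `T_{p,n}`. For `p = 4` there are closed walks of lengths 3 and 4 through a common
column, which gives every `n = 3x + 4y`, i.e. every `n ≥ 3` except 5. For `T_{4k,5} ≅ T_{5,4k}`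
closed walks of lengths 8 and 12 through a common column of height 5 give every `4k` with
`k ≥ 2`.
-/

theorem Fin.add_one_add_one_ne_self {n : ℕ} [NeZero n] (hn : 3 ≤ n) (u : Fin n) :
    u + 1 + 1 ≠ u := by
  rw [add_assoc, Ne, add_eq_left, Fin.ext_iff, Fin.val_add, Fin.val_one', Fin.val_zero,
    Nat.one_mod_eq_one.mpr (by omega), Nat.mod_eq_of_lt (by omega)]
  omega

theorem Fin.sub_one_ne_add_one {n : ℕ} [NeZero n] (hn : 3 ≤ n) (u : Fin n) : u - 1 ≠ u + 1 :=
  fun h => Fin.add_one_add_one_ne_self hn (u - 1) (by rw [sub_add_cancel, h])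

namespace SimpleGraph

variable {V W V' W' α : Type*} {G : SimpleGraph V} {H : SimpleGraph W}
  {G' : SimpleGraph V'} {H' : SimpleGraph W'}

/-- `c v w` is the colour of the incidence `(v, vw)`. -/
structure IsIncidenceArcColoring (G : SimpleGraph V) (c : V → V → α) : Prop where
  injOn_neighborSet : ∀ v, Set.InjOn (c v) (G.neighborSet v)
  ne_of_adj_of_adj : ∀ ⦃u v w⦄, G.Adj u v → G.Adj v w → c u v ≠ c v w

namespace IsIncidenceArcColoring

variable {c : V → V → α}

noncomputable def toColoring (hc : G.IsIncidenceArcColoring c) : (incidenceGraph G).Coloring α :=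
  Coloring.mk (fun i => c i.1.1 (Sym2.Mem.other i.2.2)) <| by
    rintro ⟨⟨v, e⟩, he, hv⟩ ⟨⟨w, f⟩, hf, hw⟩ ⟨hne, hcase⟩
    have hx := Sym2.other_spec hv
    have hy := Sym2.other_spec hw
    generalize Sym2.Mem.other hv = x at hx ⊢
    generalize Sym2.Mem.other hw = y at hy ⊢
    dsimp only at hx hy hcase ⊢
    subst hx hy
    have hvx : G.Adj v x := he
    have hwy : G.Adj w y := hf
    rcases hcase with rfl | hef | hvw | hvw
    · exact hc.injOn_neighborSet v hvx hwy |>.mt fun hxy => hne (by subst hxy; rfl)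
    · rcases Sym2.eq_iff.mp hef with ⟨rfl, rfl⟩ | ⟨rfl, rfl⟩
      · exact absurd rfl hne
      · exact hc.ne_of_adj_of_adj hvx hvx.symm
    · obtain rfl : w = x := by
        rcases Sym2.eq_iff.mp hvw with ⟨-, h⟩ | ⟨h, h'⟩ <;> [exact h; exact h'.trans h]
      exact hc.ne_of_adj_of_adj hvx hwy
    · obtain rfl : v = y := by
        rcases Sym2.eq_iff.mp hvw with ⟨h, h'⟩ | ⟨h, -⟩ <;> [exact h.trans h'; exact h]
      exact (hc.ne_of_adj_of_adj hwy hvx).symm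

theorem incidenceChromaticNumber_le [Fintype α] (hc : G.IsIncidenceArcColoring c) :
    incidenceChromaticNumber G ≤ Fintype.card α :=
  hc.toColoring.colorable.chromaticNumber_le

end IsIncidenceArcColoring

def Hom.IsLocallyInjective (f : G →g H) : Prop :=
  ∀ v, Set.InjOn f (G.neighborSet v)

theorem Hom.IsLocallyInjective.of_injective {f : G →g H} (hf : Function.Injective f) :
    f.IsLocallyInjective :=
  fun _ => hf.injOn

theorem IsIncidenceArcColoring.comap {c : W → W → α} (hc : H.IsIncidenceArcColoring c)
    (f : G →g H) (hf : f.IsLocallyInjective) :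
    G.IsIncidenceArcColoring fun v w => c (f v) (f w) where
  injOn_neighborSet v _ hw _ hw' hww' :=
    hf v hw hw' <| hc.injOn_neighborSet (f v) (f.map_adj hw) (f.map_adj hw') hww'
  ne_of_adj_of_adj _ _ _ huv hvw := hc.ne_of_adj_of_adj (f.map_adj huv) (f.map_adj hvw)

def Hom.boxProd (f : G →g G') (g : H →g H') : G.boxProd H →g G'.boxProd H' where
  toFun := Prod.map f g
  map_rel' := by
    rintro ⟨a, b⟩ ⟨a', b'⟩ (⟨h, rfl⟩ | ⟨h, rfl⟩)
    · exact Or.inl ⟨f.map_adj h, rfl⟩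
    · exact Or.inr ⟨g.map_adj h, rfl⟩

theorem Hom.IsLocallyInjective.boxProd {f : G →g G'} {g : H →g H'} (hf : f.IsLocallyInjective)
    (hg : g.IsLocallyInjective) : (f.boxProd g).IsLocallyInjective := by
  rintro ⟨a, b⟩ ⟨a₁, b₁⟩ h₁ ⟨a₂, b₂⟩ h₂ heq
  simp only [mem_neighborSet, boxProd_adj] at h₁ h₂
  simp only [Hom.boxProd, RelHom.coeFn_mk, Prod.map, Prod.mk.injEq] at heq
  rcases h₁ with ⟨h₁, rfl⟩ | ⟨h₁, rfl⟩ <;> rcases h₂ with ⟨h₂, rfl⟩ | ⟨h₂, rfl⟩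
  · rw [hf a h₁ h₂ heq.1]
  · exact absurd heq.1 (f.map_adj h₁).ne'
  · exact absurd heq.1 (f.map_adj h₂).ne
  · rw [hg b h₁ h₂ heq.2]

theorem cycleGraph_adj_iff {n : ℕ} [NeZero n] (hn : 2 ≤ n) {u v : Fin n} :
    (cycleGraph n).Adj u v ↔ v = u + 1 ∨ u = v + 1 := by
  obtain ⟨n, rfl⟩ : ∃ m, n = m + 2 := ⟨n - 2, by omega⟩
  rw [cycleGraph_adj, sub_eq_iff_eq_add, sub_eq_iff_eq_add, add_comm u, add_comm v, or_comm]

theorem exists_cycleGraph_cover {m p : ℕ} [NeZero m] (hp : 3 ≤ p) (hpm : p ∣ m) :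
    ∃ f : cycleGraph m →g cycleGraph p, f.IsLocallyInjective := by
  have : NeZero p := ⟨by omega⟩
  have hm : 2 ≤ m := by have := Nat.le_of_dvd (Nat.pos_of_ne_zero (NeZero.ne m)) hpm; omega
  let φ : Fin m → Fin p := fun i => Fin.ofNat p i
  have hφ : ∀ i, φ (i + 1) = φ i + 1 := fun i => by
    ext
    simp [φ, Fin.val_add, Nat.mod_mod_of_dvd _ hpm, Nat.add_mod]
  refine ⟨⟨φ, fun {u v} huv => ?_⟩, fun u v huv w huw hvw => ?_⟩
  · rw [cycleGraph_adj_iff hm] at huv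
    rw [cycleGraph_adj_iff (by omega)]
    rcases huv with rfl | rfl
    · exact Or.inl (hφ u)
    · exact Or.inr (hφ v)
  · simp only [mem_neighborSet, cycleGraph_adj_iff hm] at huv huw
    simp only [RelHom.coeFn_mk] at hvw
    rcases huv with rfl | rfl <;> rcases huw with rfl | huw
    · rfl
    · subst huw
      exact absurd (by rwa [hφ, hφ] at hvw) (Fin.add_one_add_one_ne_self hp _)
    · exact absurd (by rw [hφ, hφ] at hvw; exact hvw.symm) (Fin.add_one_add_one_ne_self hp _)
    · exact add_right_cancel huw

theorem exists_toroidalGrid_cover {m p : ℕ} (n : ℕ) [NeZero m] (hp : 3 ≤ p) (hpm : p ∣ m) :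
    ∃ f : toroidalGrid m n →g toroidalGrid p n, f.IsLocallyInjective := by
  obtain ⟨f, hf⟩ := exists_cycleGraph_cover hp hpm
  exact ⟨Hom.boxProd f Hom.id, hf.boxProd (.of_injective Function.injective_id)⟩

end SimpleGraph

section ClosedWalk

variable {α : Type*} {R : α → α → Prop} {h : α} {t t₁ t₂ : List α}

/-- `h :: t` is the vertex sequence of a closed `R`-walk from `h` back to `h` of length
`t.length`. -/
def IsClosedWalk (R : α → α → Prop) (h : α) (t : List α) : Prop :=
  (h :: t).IsChain R ∧ (h :: t).getLast (List.cons_ne_nil h t) = h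

instance [DecidableEq α] [DecidableRel R] : Decidable (IsClosedWalk R h t) := by
  unfold IsClosedWalk; infer_instance

theorem IsClosedWalk.append (h₁ : IsClosedWalk R h t₁) (h₂ : IsClosedWalk R h t₂) :
    IsClosedWalk R h (t₁ ++ t₂) := by
  refine ⟨List.IsChain.append (l₁ := h :: t₁) h₁.1 h₂.1.tail ?_, ?_⟩
  · simp only [List.getLast?_eq_some_getLast (List.cons_ne_nil h t₁), h₁.2, Option.mem_some_iff,
      forall_eq']
    exact h₂.1.rel_head?
  · rcases t₂.eq_nil_or_concat with rfl | ⟨l, b, rfl⟩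
    · simpa using h₁.2
    · simpa using h₂.2

theorem IsClosedWalk.flatten_replicate (ht : IsClosedWalk R h t) :
    ∀ x, IsClosedWalk R h (List.replicate x t).flatten
  | 0 => ⟨.singleton h, rfl⟩
  | x + 1 => by
    rw [List.replicate_succ, List.flatten_cons]
    exact ht.append (ht.flatten_replicate x)

theorem IsClosedWalk.rel_getElem_add_one {n : ℕ} [NeZero n] (ht : IsClosedWalk R h t)
    (hn : t.length = n) (j : Fin n) :
    R ((h :: t)[j.val]'(by simp [hn, Nat.lt_succ_of_lt j.isLt]))
      ((h :: t)[(j + 1).val]'(by simp [hn, Nat.lt_succ_of_lt (j + 1).isLt])) := by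
  convert List.isChain_iff_getElem.mp ht.1 j (by simp; omega) using 1
  rcases Nat.lt_or_ge (j.val + 1) n with hj | hj
  · simp [Fin.val_add_one_of_lt' hj]
  · have hj' : j.val + 1 = n := by omega
    have h0 : (j + 1).val = 0 := by
      rw [Fin.val_add, Fin.val_one', Nat.add_mod_mod, hj', Nat.mod_self]
    have hlast := ht.2
    rw [List.getLast_eq_getElem] at hlast
    simp only [h0, List.getElem_cons_zero]
    simp only [hj', ← hn, List.length_cons, Nat.add_sub_cancel] at hlast ⊢
    exact hlast.symm

end ClosedWalk

section Grid

variable {p n : ℕ} [NeZero p] [NeZero n]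

/-- The neighbours of `v` in `T_{p,n}`, indexed by direction: up, down, left, right. -/
def gridStep (d : Fin 4) (v : Fin p × Fin n) : Fin p × Fin n :=
  ![(v.1 + 1, v.2), (v.1 - 1, v.2), (v.1, v.2 - 1), (v.1, v.2 + 1)] d

theorem gridStep_left_injective (hp : 3 ≤ p) (hn : 3 ≤ n) (v : Fin p × Fin n) :
    Function.Injective (gridStep · v) := by
  intro d e hde
  fin_cases d <;> fin_cases e <;>
    simp_all [gridStep, Prod.ext_iff, Fin.sub_one_ne_add_one, (Fin.sub_one_ne_add_one _ _).symm]

theorem toroidalGrid_adj_iff (hp : 2 ≤ p) (hn : 2 ≤ n) {v w : Fin p × Fin n} :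
    (toroidalGrid p n).Adj v w ↔ ∃ d, gridStep d v = w := by
  rw [toroidalGrid, boxProd_adj, cycleGraph_adj_iff hp, cycleGraph_adj_iff hn]
  constructor
  · rintro (⟨h | h, h'⟩ | ⟨h | h, h'⟩)
    · exact ⟨0, Prod.ext h.symm h'⟩
    · exact ⟨1, Prod.ext (eq_sub_of_add_eq h.symm).symm h'⟩
    · exact ⟨3, Prod.ext h' h.symm⟩
    · exact ⟨2, Prod.ext h' (eq_sub_of_add_eq h.symm).symm⟩
  · rintro ⟨d, rfl⟩
    fin_cases d <;> simp [gridStep]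

def gridDir (v w : Fin p × Fin n) : Fin 4 :=
  if w = gridStep 0 v then 0 else if w = gridStep 1 v then 1 else if w = gridStep 2 v then 2 else 3

theorem gridDir_gridStep (hp : 3 ≤ p) (hn : 3 ≤ n) (v : Fin p × Fin n) (d : Fin 4) :
    gridDir v (gridStep d v) = d := by
  fin_cases d <;> simp [gridDir, (gridStep_left_injective hp hn v).eq_iff]

end Grid

/-- The colours of the arcs leaving the vertices of one column of `T_{p,n}`: row, then
direction as in `gridStep`. -/
abbrev GridColumn (p : ℕ) := Fin p → Fin 4 → Fin 6

namespace GridColumn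

variable {p : ℕ} [NeZero p]

def IsValid (c : GridColumn p) : Prop :=
  ∀ r, Function.Injective (c r) ∧ ∀ d, c r 0 ≠ c (r + 1) d ∧ c r 1 ≠ c (r - 1) d

def Precedes (c c' : GridColumn p) : Prop :=
  ∀ r d, c r 3 ≠ c' r d ∧ c' r 2 ≠ c r d

def Step (c c' : GridColumn p) : Prop := c.IsValid ∧ c.Precedes c'

-- Unfolding `Function.Injective` avoids its `Finset`-based instance, which is slow in the kernel.
instance (c c' : GridColumn p) : Decidable (c.Step c') := by
  unfold Step IsValid Precedes Function.Injective; infer_instance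

end GridColumn

theorem isIncidenceArcColoring_toroidalGrid_of_columns {p n : ℕ} [NeZero p] [NeZero n]
    (hp : 3 ≤ p) (hn : 3 ≤ n) (col : Fin n → GridColumn p)
    (hcol : ∀ j, (col j).Step (col (j + 1))) :
    (toroidalGrid p n).IsIncidenceArcColoring fun v w => col v.2 v.1 (gridDir v w) where
  injOn_neighborSet v := by
    rintro _ hw _ hw' hcw
    obtain ⟨d, rfl⟩ := (toroidalGrid_adj_iff (by omega) (by omega)).mp hw
    obtain ⟨d', rfl⟩ := (toroidalGrid_adj_iff (by omega) (by omega)).mp hw'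
    simp only [gridDir_gridStep hp hn] at hcw
    rw [((hcol v.2).1 v.1).1 hcw]
  ne_of_adj_of_adj u v w huv hvw := by
    obtain ⟨d, rfl⟩ := (toroidalGrid_adj_iff (by omega) (by omega)).mp huv
    obtain ⟨e, rfl⟩ := (toroidalGrid_adj_iff (by omega) (by omega)).mp hvw
    simp only [gridDir_gridStep hp hn]
    fin_cases d
    · exact (((hcol u.2).1 u.1).2 e).1
    · exact (((hcol u.2).1 u.1).2 e).2
    · simpa [gridStep] using ((hcol (u.2 - 1)).2 u.1 e).2
    · exact ((hcol u.2).2 u.1 e).1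

theorem exists_isIncidenceArcColoring_toroidalGrid_of_isClosedWalk {p n : ℕ} [NeZero p]
    (hp : 3 ≤ p) (hn : 3 ≤ n) {h : GridColumn p} {t₁ t₂ : List (GridColumn p)}
    (ht₁ : IsClosedWalk GridColumn.Step h t₁) (ht₂ : IsClosedWalk GridColumn.Step h t₂) {x y : ℕ}
    (hxy : n = x * t₁.length + y * t₂.length) :
    ∃ c : Fin p × Fin n → Fin p × Fin n → Fin 6, (toroidalGrid p n).IsIncidenceArcColoring c := by
  have : NeZero n := ⟨by omega⟩
  have hw := (ht₁.flatten_replicate x).append (ht₂.flatten_replicate y)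
  have hlen : ((List.replicate x t₁).flatten ++ (List.replicate y t₂).flatten).length = n := by
    simp [hxy]
  exact ⟨_, isIncidenceArcColoring_toroidalGrid_of_columns hp hn _ (hw.rel_getElem_add_one hlen)⟩

def hubA : GridColumn 4 := ![![3, 4, 5, 0], ![2, 1, 0, 5], ![5, 4, 1, 0], ![2, 3, 0, 1]]

def loopA3 : List (GridColumn 4) :=
  [![![1, 4, 2, 5], ![2, 3, 4, 0], ![4, 5, 3, 1], ![3, 2, 5, 0]],
   ![![0, 4, 3, 1], ![3, 2, 1, 4], ![4, 5, 0, 2], ![2, 3, 1, 5]],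
   hubA]

def loopA4 : List (GridColumn 4) :=
  [![![2, 5, 1, 4], ![3, 0, 4, 1], ![1, 5, 2, 4], ![3, 0, 4, 2]],
   ![![0, 1, 3, 2], ![3, 5, 2, 4], ![2, 1, 0, 5], ![4, 3, 5, 0]],
   ![![0, 3, 4, 1], ![5, 2, 1, 3], ![0, 4, 3, 2], ![2, 5, 1, 4]],
   hubA]

def hubB : GridColumn 5 :=
  ![![5, 0, 2, 4], ![4, 3, 0, 1], ![3, 2, 5, 0], ![0, 1, 5, 2], ![1, 3, 2, 4]]

def loopB8 : List (GridColumn 5) :=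
  [![![0, 1, 3, 5], ![3, 2, 5, 4], ![5, 1, 4, 2], ![1, 0, 4, 3], ![2, 5, 0, 3]],
   ![![0, 1, 2, 4], ![2, 3, 1, 5], ![3, 4, 0, 5], ![1, 2, 5, 4], ![5, 0, 4, 2]],
   ![![0, 2, 3, 5], ![2, 1, 4, 3], ![4, 0, 1, 3], ![1, 2, 0, 3], ![4, 5, 3, 0]],
   ![![0, 2, 4, 3], ![2, 1, 5, 4], ![1, 0, 5, 4], ![0, 2, 4, 5], ![5, 3, 1, 4]],
   ![![0, 2, 1, 4], ![2, 5, 3, 1], ![1, 0, 3, 5], ![2, 4, 3, 0], ![3, 5, 0, 1]],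
   ![![0, 1, 3, 2], ![2, 5, 4, 3], ![0, 1, 4, 3], ![3, 2, 5, 1], ![5, 0, 4, 2]],
   ![![0, 1, 5, 3], ![5, 4, 1, 2], ![1, 0, 2, 4], ![2, 3, 0, 4], ![4, 5, 3, 0]],
   hubB]

def loopB12 : List (GridColumn 5) :=
  [![![0, 1, 3, 2], ![3, 5, 2, 4], ![2, 1, 4, 5], ![4, 0, 3, 1], ![5, 2, 0, 3]],
   ![![0, 1, 4, 3], ![5, 2, 1, 3], ![1, 0, 3, 2], ![3, 4, 5, 0], ![5, 2, 4, 0]],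
   ![![0, 4, 2, 1], ![2, 5, 4, 1], ![0, 3, 4, 5], ![4, 1, 2, 3], ![3, 5, 1, 2]],
   ![![0, 2, 3, 4], ![2, 5, 3, 4], ![4, 0, 1, 3], ![1, 2, 0, 5], ![5, 4, 0, 3]],
   ![![0, 1, 5, 3], ![3, 2, 1, 5], ![1, 4, 2, 5], ![3, 0, 4, 2], ![4, 5, 2, 0]],
   ![![0, 4, 2, 1], ![1, 3, 4, 2], ![2, 0, 3, 4], ![0, 5, 1, 3], ![3, 2, 1, 5]],
   ![![0, 2, 3, 4], ![4, 1, 5, 3], ![3, 0, 1, 5], ![5, 2, 4, 0], ![1, 3, 4, 0]],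
   ![![0, 1, 5, 2], ![5, 4, 2, 1], ![2, 3, 4, 1], ![1, 5, 3, 4], ![4, 2, 5, 3]],
   ![![0, 1, 3, 4], ![2, 5, 3, 4], ![4, 0, 5, 3], ![3, 1, 2, 0], ![5, 4, 0, 2]],
   ![![0, 1, 2, 3], ![2, 5, 1, 3], ![0, 4, 1, 5], ![1, 3, 5, 2], ![5, 0, 3, 4]],
   ![![0, 4, 5, 1], ![1, 2, 4, 5], ![2, 0, 3, 4], ![4, 1, 0, 3], ![3, 5, 1, 0]],
   hubB]

theorem isClosedWalk_loopA3 : IsClosedWalk GridColumn.Step hubA loopA3 := by decide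

theorem isClosedWalk_loopA4 : IsClosedWalk GridColumn.Step hubA loopA4 := by decide

theorem isClosedWalk_loopB8 : IsClosedWalk GridColumn.Step hubB loopB8 := by decide

theorem isClosedWalk_loopB12 : IsClosedWalk GridColumn.Step hubB loopB12 := by decide

theorem exists_isIncidenceArcColoring_toroidalGrid_four {n : ℕ} (hn : 3 ≤ n) (h5 : n ≠ 5) :
    ∃ c : _ → _ → Fin 6, (toroidalGrid 4 n).IsIncidenceArcColoring c :=
  exists_isIncidenceArcColoring_toroidalGrid_of_isClosedWalk (by norm_num) hn
    isClosedWalk_loopA3 isClosedWalk_loopA4 (x := (n - 4 * (n % 3)) / 3) (y := n % 3)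
    (by simp [loopA3, loopA4]; omega)

theorem exists_isIncidenceArcColoring_toroidalGrid_five {k : ℕ} (hk : 2 ≤ k) :
    ∃ c : _ → _ → Fin 6, (toroidalGrid 5 (4 * k)).IsIncidenceArcColoring c :=
  exists_isIncidenceArcColoring_toroidalGrid_of_isClosedWalk (by norm_num) (by omega)
    isClosedWalk_loopB8 isClosedWalk_loopB12 (x := (k - 3 * (k % 2)) / 2) (y := k % 2)
    (by simp [loopB8, loopB12]; omega)

theorem incidence_chromatic_toroidal_grid_four_k (k n : ℕ) (hk : 1 ≤ k) (hn : 3 ≤ n)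
    (h : ¬(k = 1 ∧ n = 5)) :
    incidenceChromaticNumber (toroidalGrid (4 * k) n) ≤ 6 := by
  have : NeZero (4 * k) := ⟨by omega⟩
  obtain ⟨c, hc⟩ : ∃ c : _ → _ → Fin 6, (toroidalGrid (4 * k) n).IsIncidenceArcColoring c := by
    by_cases h5 : n = 5
    · subst h5
      obtain ⟨c, hc⟩ := exists_isIncidenceArcColoring_toroidalGrid_five (k := k) (by omega)
      let e := boxProdComm (cycleGraph (4 * k)) (cycleGraph 5)
      exact ⟨_, hc.comap e.toHom (.of_injective e.injective)⟩
    · obtain ⟨c, hc⟩ := exists_isIncidenceArcColoring_toroidalGrid_four hn h5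
      obtain ⟨f, hf⟩ := exists_toroidalGrid_cover n (by norm_num) (dvd_mul_right 4 k)
      exact ⟨_, hc.comap f hf⟩
  simpa using hc.incidenceChromaticNumber_le
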